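/- arXiv:0705.4159 — 4 statements merged into one kernel-verified Lean document; each statement's English description precedes it below -/
import Mathlib

section
/- For any free group F, the intersection of all terms of the lower central series of F is trivial, i.e. ⋂_{n=1}^∞ F_n = {e}. -/
/-!
Write `g ≠ 1` in `CoprodI G` as a reduced word `g₁ ⋯ gₖ` with `gₚ ∈ G iₚ` and adjacent
`iₚ` distinct. In `(k+1) × (k+1)` matrices let `Nᵢ` have a `1` at `(p - 1, p)` for every `p` with
`iₚ = i`; since adjacent letters lie in different factors, `Nᵢ² = 0`, so `m ↦ 1 + χ m • Nᵢ` is a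
representation of `G i` and these assemble to one of `CoprodI G`. Its image is unitriangular:
commutators of matrices `≡ 1` modulo the `d`-th and the `e`-th superdiagonal are `≡ 1` modulo the
`(d + e)`-th, so the `k`-th term of the lower central series maps to `1`. But the `(0, k)` entry
of the image of `g` is `χ g₁ ⋯ χ gₖ ≠ 0`. The free group is the free product of copies of `ℤ`.
-/

open scoped commutatorElement

namespace Matrix

section Superdiag

variable {R : Type*} [Ring R] {n : ℕ}

def superdiag (R : Type*) [Ring R] (n d : ℕ) : Submodule R (Matrix (Fin n) (Fin n) R) where
  carrier := {A | ∀ i j : Fin n, (j : ℕ) < i + d → A i j = 0}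
  zero_mem' _ _ _ := rfl
  add_mem' hA hB i j h := by simp [hA i j h, hB i j h]
  smul_mem' c _ hA i j h := by simp [hA i j h]

theorem superdiag_antitone : Antitone (superdiag R n) :=
  fun _ _ h _ hA i j hij => hA i j (by omega)

theorem one_mem_superdiag_zero : (1 : Matrix (Fin n) (Fin n) R) ∈ superdiag R n 0 :=
  fun i j h => one_apply_ne (by omega)

theorem mul_mem_superdiag {d e : ℕ} {A B : Matrix (Fin n) (Fin n) R}
    (hA : A ∈ superdiag R n d) (hB : B ∈ superdiag R n e) : A * B ∈ superdiag R n (d + e) := by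
  intro i j h
  refine (mul_apply (M := A) (N := B)).trans <| Finset.sum_eq_zero fun m _ => ?_
  by_cases hm : (m : ℕ) < i + d
  · rw [hA i m hm, zero_mul]
  · rw [hB m j (by omega), mul_zero]

theorem eq_zero_of_mem_superdiag_self {A : Matrix (Fin n) (Fin n) R}
    (hA : A ∈ superdiag R n n) : A = 0 :=
  ext fun i j => hA i j (by omega)

theorem mul_sub_one_mem_superdiag {d : ℕ} {A B : Matrix (Fin n) (Fin n) R}
    (hA : A - 1 ∈ superdiag R n d) (hB : B - 1 ∈ superdiag R n d) :
    A * B - 1 ∈ superdiag R n d := by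
  have h : A * B - 1 = (A - 1) * (B - 1) + (A - 1) + (B - 1) := by noncomm_ring
  rw [h]
  exact add_mem (add_mem (superdiag_antitone (by omega) (mul_mem_superdiag hA hB)) hA) hB

theorem mem_superdiag_zero_of_sub_one_mem {d : ℕ} {A : Matrix (Fin n) (Fin n) R}
    (hA : A - 1 ∈ superdiag R n d) : A ∈ superdiag R n 0 := by
  simpa using add_mem one_mem_superdiag_zero (superdiag_antitone (Nat.zero_le d) hA)

/-- For `d = 1` this is the unitriangular group. -/
def superdiagUnits (R : Type*) [Ring R] (n d : ℕ) : Subgroup (Matrix (Fin n) (Fin n) R)ˣ where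
  carrier := {u | (u : Matrix (Fin n) (Fin n) R) - 1 ∈ superdiag R n d ∧
    (↑u⁻¹ : Matrix (Fin n) (Fin n) R) - 1 ∈ superdiag R n d}
  one_mem' := by simp [zero_mem]
  mul_mem' hu hv := by
    refine ⟨?_, ?_⟩
    · simpa using mul_sub_one_mem_superdiag hu.1 hv.1
    · simpa using mul_sub_one_mem_superdiag hv.2 hu.2
  inv_mem' hu := ⟨hu.2, by simpa using hu.1⟩

theorem val_commutatorElement_sub_one_mem {d e : ℕ} {x y : (Matrix (Fin n) (Fin n) R)ˣ}
    (hx : x ∈ superdiagUnits R n d) (hy : y ∈ superdiagUnits R n e) :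
    (↑⁅x, y⁆ : Matrix (Fin n) (Fin n) R) - 1 ∈ superdiag R n (d + e) := by
  set X := (x : Matrix (Fin n) (Fin n) R)
  set Y := (y : Matrix (Fin n) (Fin n) R)
  set X' := (↑x⁻¹ : Matrix (Fin n) (Fin n) R)
  set Y' := (↑y⁻¹ : Matrix (Fin n) (Fin n) R)
  have key : (↑⁅x, y⁆ : Matrix (Fin n) (Fin n) R) - 1 =
      ((X - 1) * (Y - 1) - (Y - 1) * (X - 1)) * (X' * Y') := by
    have hYX : Y * X * (X' * Y') = 1 := by simp [X, Y, X', Y', mul_assoc]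
    rw [show (X - 1) * (Y - 1) - (Y - 1) * (X - 1) = X * Y - Y * X by noncomm_ring, sub_mul, hYX]
    simp [commutatorElement_def, X, Y, X', Y', mul_assoc]
  have hcomm : (X - 1) * (Y - 1) - (Y - 1) * (X - 1) ∈ superdiag R n (d + e) :=
    sub_mem (mul_mem_superdiag hx.1 hy.1) (add_comm e d ▸ mul_mem_superdiag hy.1 hx.1)
  rw [key]
  simpa using mul_mem_superdiag hcomm (mul_mem_superdiag
    (mem_superdiag_zero_of_sub_one_mem hx.2) (mem_superdiag_zero_of_sub_one_mem hy.2))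

theorem commutatorElement_mem_superdiagUnits {d e : ℕ} {x y : (Matrix (Fin n) (Fin n) R)ˣ}
    (hx : x ∈ superdiagUnits R n d) (hy : y ∈ superdiagUnits R n e) :
    ⁅x, y⁆ ∈ superdiagUnits R n (d + e) :=
  ⟨val_commutatorElement_sub_one_mem hx hy, by
    rw [commutatorElement_inv, add_comm]
    exact val_commutatorElement_sub_one_mem hy hx⟩

theorem lowerCentralSeries_le_comap_superdiagUnits {G : Type*} [Group G]
    (φ : G →* (Matrix (Fin n) (Fin n) R)ˣ) (hφ : ∀ g, φ g ∈ superdiagUnits R n 1) (d : ℕ) :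
    (⊤ : Subgroup G).lowerCentralSeries d ≤ (superdiagUnits R n (d + 1)).comap φ :=
  Subgroup.descending_central_series_ge_lower (fun d => (superdiagUnits R n (d + 1)).comap φ)
    ⟨eq_top_iff.2 fun g _ => hφ g, fun x d hx g => by
      simpa [map_commutatorElement] using commutatorElement_mem_superdiagUnits hx (hφ g)⟩ d

theorem map_eq_one_of_mem_lowerCentralSeries {G : Type*} [Group G]
    (φ : G →* (Matrix (Fin (n + 1)) (Fin (n + 1)) R)ˣ) (hφ : ∀ g, φ g ∈ superdiagUnits R (n + 1) 1)
    {g : G} (hg : g ∈ (⊤ : Subgroup G).lowerCentralSeries n) : φ g = 1 :=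
  Units.ext <| sub_eq_zero.1 <| eq_zero_of_mem_superdiag_self
    (lowerCentralSeries_le_comap_superdiagUnits φ hφ n hg).1

theorem toHomUnits_mem_superdiagUnits {G : Type*} [Group G] {d : ℕ}
    (ψ : G →* Matrix (Fin n) (Fin n) R) (hψ : ∀ g, ψ g - 1 ∈ superdiag R n d) (g : G) :
    ψ.toHomUnits g ∈ superdiagUnits R n d :=
  ⟨hψ g, by simpa [← map_inv] using hψ g⁻¹⟩

end Superdiag

section StepMatrix

variable {R ι : Type*} [CommRing R] [DecidableEq ι]

def stepMatrix (R : Type*) [CommRing R] (s : List ι) (i : ι) :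
    Matrix (Fin (s.length + 1)) (Fin (s.length + 1)) R :=
  of fun p q => if (q : ℕ) = p + 1 ∧ s[(p : ℕ)]? = some i then 1 else 0

theorem stepMatrix_mem_superdiag (s : List ι) (i : ι) :
    stepMatrix R s i ∈ superdiag R (s.length + 1) 1 := fun p q h => by
  simp only [stepMatrix, of_apply, ite_eq_right_iff, and_imp]
  intro hq
  omega

theorem mul_stepMatrix_apply_zero {s : List ι} {i : ι}
    (P : Matrix (Fin (s.length + 1)) (Fin (s.length + 1)) R) (r : Fin (s.length + 1)) :
    (P * stepMatrix R s i) r 0 = 0 :=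
  (mul_apply ..).trans <| Finset.sum_eq_zero fun m _ => by simp [stepMatrix]

theorem mul_stepMatrix_apply_succ {s : List ι} {i : ι}
    (P : Matrix (Fin (s.length + 1)) (Fin (s.length + 1)) R) (r : Fin (s.length + 1))
    (m : Fin s.length) :
    (P * stepMatrix R s i) r m.succ = if s[(m : ℕ)] = i then P r m.castSucc else 0 := by
  rw [mul_apply, Finset.sum_eq_single m.castSucc]
  · simp [stepMatrix]
  · intro k _ hk
    simp only [stepMatrix, of_apply, Fin.val_succ]
    rw [if_neg fun h => hk (Fin.ext (by simp; omega)), mul_zero]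
  · simp

theorem stepMatrix_mul_self {s : List ι} (hs : s.IsChain (· ≠ ·)) (i : ι) :
    stepMatrix R s i * stepMatrix R s i = 0 := by
  ext r q
  cases q using Fin.cases with
  | zero => exact mul_stepMatrix_apply_zero _ r
  | succ m =>
    rw [mul_stepMatrix_apply_succ]
    split_ifs with hm
    · simp only [stepMatrix, of_apply, Fin.val_castSucc, zero_apply, ite_eq_right_iff, and_imp]
      intro hmr hr
      have hne := List.isChain_iff_getElem.1 hs r (by omega)
      simp only [hmr, List.getElem?_eq_getElem (show (r : ℕ) < s.length by omega)] at hm hr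
      exact absurd (hm ▸ Option.some_injective _ hr) hne
    · rfl

def oneAddStepHom {s : List ι} (hs : s.IsChain (· ≠ ·)) (i : ι) :
    Multiplicative R →* Matrix (Fin (s.length + 1)) (Fin (s.length + 1)) R where
  toFun a := 1 + a.toAdd • stepMatrix R s i
  map_one' := by simp
  map_mul' a b := by
    simp only [toAdd_mul, add_mul, mul_add, one_mul, mul_one, smul_mul_smul_comm,
      stepMatrix_mul_self hs, smul_zero, add_smul]
    abel

theorem prod_oneAdd_smul_stepMatrix_zero_apply {s : List ι} (l : List (ι × R))
    (hl : l.map Prod.fst <+: s) (q : Fin (s.length + 1)) :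
    (l.length < q → (l.map fun p => 1 + p.2 • stepMatrix R s p.1).prod 0 q = 0) ∧
      ((q : ℕ) = l.length →
        (l.map fun p => 1 + p.2 • stepMatrix R s p.1).prod 0 q = (l.map Prod.snd).prod) := by
  induction l using List.reverseRecOn generalizing q with
  | nil =>
    refine ⟨fun hq => one_apply_ne ?_, fun hq => ?_⟩
    · exact fun h => by simp [← h] at hq
    · simp [show q = 0 from Fin.ext hq]
  | append_singleton l x ih =>
    have ih' := ih ((List.prefix_append _ _).trans (by simpa using hl))
    have hx : ∀ h : l.length < s.length, s[l.length] = x.1 := fun h => by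
      simpa using (hl.getElem (i := l.length) (by simp)).symm
    simp only [List.map_append, List.map_singleton, List.prod_append, List.prod_singleton,
      List.length_append, List.length_singleton, mul_add, mul_one, Matrix.mul_smul, add_apply,
      smul_apply, smul_eq_mul]
    cases q using Fin.cases with
    | zero => simp
    | succ m =>
      rw [mul_stepMatrix_apply_succ]
      refine ⟨fun hm => ?_, fun hm => ?_⟩
      · rw [(ih' m.succ).1 (by simp at hm ⊢; omega), (ih' m.castSucc).1 (by simp at hm ⊢; omega)]
        simp
      · simp only [Fin.val_succ, Nat.add_right_cancel_iff] at hm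
        rw [(ih' m.succ).1 (by simp; omega), (ih' m.castSucc).2 (by simpa using hm),
          if_pos (by simpa [hm] using hx (hm ▸ m.2)), zero_add, mul_comm]

theorem prod_oneAdd_smul_stepMatrix_zero_last (l : List (ι × R)) :
    (l.map fun p => 1 + p.2 • stepMatrix R (l.map Prod.fst) p.1).prod 0 (Fin.last _) =
      (l.map Prod.snd).prod :=
  (prod_oneAdd_smul_stepMatrix_zero_apply l (List.prefix_refl _) _).2 (by simp)

end StepMatrix

end Matrix

theorem Subgroup.iInf_lowerCentralSeries_eq_bot_of_injective {G H : Type*} [Group G] [Group H]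
    {f : G →* H} (hf : Function.Injective f)
    (h : ⨅ n, (⊤ : Subgroup H).lowerCentralSeries n = ⊥) :
    ⨅ n, (⊤ : Subgroup G).lowerCentralSeries n = ⊥ := by
  refine eq_bot_iff.2 fun g hg => (Subgroup.mem_bot).2 (hf ?_)
  rw [map_one, ← Subgroup.mem_bot, ← h, Subgroup.mem_iInf]
  intro n
  have hmap := Subgroup.mem_map_of_mem f (Subgroup.mem_iInf.1 hg n)
  rw [Subgroup.map_lowerCentralSeries] at hmap
  exact Subgroup.lowerCentralSeries_mono n le_top hmap

namespace Monoid.CoprodI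

open Matrix

section StepRep

variable {ι R : Type*} {G : ι → Type*} [∀ i, Group (G i)] [CommRing R] [DecidableEq ι]

def stepRep (χ : ∀ i, G i →* Multiplicative R) {s : List ι} (hs : s.IsChain (· ≠ ·)) :
    CoprodI G →* Matrix (Fin (s.length + 1)) (Fin (s.length + 1)) R :=
  lift fun i => (oneAddStepHom hs i).comp (χ i)

theorem stepRep_sub_one_mem_superdiag (χ : ∀ i, G i →* Multiplicative R) {s : List ι}
    (hs : s.IsChain (· ≠ ·)) (g : CoprodI G) :
    stepRep χ hs g - 1 ∈ superdiag R (s.length + 1) 1 := by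
  induction g using CoprodI.induction_on with
  | one => simp [zero_mem]
  | of i m =>
    simpa [stepRep, oneAddStepHom] using Submodule.smul_mem _ _ (stepMatrix_mem_superdiag s i)
  | mul x y hx hy => simpa using mul_sub_one_mem_superdiag hx hy

end StepRep

theorem iInf_lowerCentralSeries_eq_bot {ι R : Type*} {G : ι → Type*}
    [∀ i, Group (G i)] [CommRing R] [IsDomain R] (χ : ∀ i, G i →* Multiplicative R)
    (hχ : ∀ i, Function.Injective (χ i)) :
    ⨅ n, (⊤ : Subgroup (CoprodI G)).lowerCentralSeries n = ⊥ := by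
  classical
  refine eq_bot_iff.2 fun g hg => ?_
  obtain ⟨w, rfl⟩ := Word.equiv.symm.surjective g
  let l := w.toList.map fun x => (x.1, (χ x.1 x.2).toAdd)
  have hs : (l.map Prod.fst).IsChain (· ≠ ·) := by
    simpa [l, List.isChain_map] using w.chain_ne
  set ψ := stepRep χ hs
  have hψ : ψ w.prod = (l.map fun p => 1 + p.2 • stepMatrix R (l.map Prod.fst) p.1).prod := by
    rw [Word.prod, map_list_prod]
    refine congrArg List.prod <| (List.map_map ..).trans <|
      (List.map_congr_left fun x _ => ?_).trans (List.map_map ..).symm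
    simp [ψ, stepRep, oneAddStepHom]
  have hψ1 : ψ w.prod = 1 := congrArg Units.val <|
    map_eq_one_of_mem_lowerCentralSeries ψ.toHomUnits
      (toHomUnits_mem_superdiagUnits ψ (stepRep_sub_one_mem_superdiag χ hs))
      (Subgroup.mem_iInf.1 hg _)
  have hcorner := prod_oneAdd_smul_stepMatrix_zero_last l
  rw [← hψ, hψ1] at hcorner
  rw [Subgroup.mem_bot]
  by_contra hne
  have hlen : l.length ≠ 0 := fun h => hne <| by
    have hw : w.toList = [] := by simpa [l] using h
    simp [Word.equiv, Word.prod, hw]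
  rw [one_apply_ne (by simpa [Fin.ext_iff, eq_comm] using hlen)] at hcorner
  obtain ⟨x, hx, hx0⟩ : ∃ x ∈ w.toList, (χ x.1 x.2).toAdd = 0 := by
    simpa [l, Function.comp_def] using hcorner.symm
  exact w.ne_one x hx (hχ x.1 (by simpa using hx0))

end Monoid.CoprodI

/-- The lower central series of any free group has trivial intersection:
`⋂_{n≥1} F_n = {e}` (here `lowerCentralSeries F n` is the paper's `F_{n+1}`,
so the intersection over all terms is the same). -/
theorem stmt_0 (α : Type*) :
    (⨅ n : ℕ, (⊤ : Subgroup (FreeGroup α)).lowerCentralSeries n) = ⊥ :=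
  Subgroup.iInf_lowerCentralSeries_eq_bot_of_injective freeGroupEquivCoprodI.injective <|
    Monoid.CoprodI.iInf_lowerCentralSeries_eq_bot (R := ℤ)
      (fun _ => FreeGroup.mulEquivIntOfUnique.toMonoidHom)
      fun _ => FreeGroup.mulEquivIntOfUnique.injective
end

section
/- Let F be the free group on generators a and b. Then the commutators [a,b] and [a²,b²] freely generate a free subgroup of F of rank 2. -/
/-!
Ping-pong on the left multiplication action of `F` on itself. In the product `x * g` of reduced
words, with `x` of length at least three, at most the last letter of `x` cancels unless `g`
begins with the inverse of the last two letters of `x`; so `x` maps every element outside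
the set of words beginning with the first two letters of `x⁻¹` into the set of words beginning
with the first two letters of `x`. For `[a,b]`, `[a,b]⁻¹`, `[a²,b²]`, `[a²,b²]⁻¹` these prefixes
are `a⁻¹b⁻¹`, `b⁻¹a⁻¹`, `a⁻¹a⁻¹` and `b⁻¹b⁻¹`, which are pairwise distinct.
-/

namespace FreeGroup

open scoped Pointwise

universe u

variable {α : Type u}

theorem IsReduced.append {L₁ L₂ : List (α × Bool)} (h₁ : IsReduced L₁) (h₂ : IsReduced L₂)
    (h : ∀ x ∈ L₁.getLast?, (x.1, !x.2) ∉ L₂.head?) : IsReduced (L₁ ++ L₂) := by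
  refine List.isChain_append.2 ⟨h₁, h₂, fun x hx y hy hxy => ?_⟩
  by_contra hne
  have hy' : y = (x.1, !x.2) := Prod.ext hxy.symm (Bool.eq_not.2 (Ne.symm hne))
  exact h x hx (hy' ▸ hy)

variable [DecidableEq α]

def cylinder (u : List (α × Bool)) : Set (FreeGroup α) := {g | u <+: g.toWord}

theorem disjoint_cylinder {u v : List (α × Bool)} (hlen : u.length = v.length) (hne : u ≠ v) :
    Disjoint (cylinder u) (cylinder v) :=
  Set.disjoint_left.2 fun _ hu hv =>
    hne <| (List.prefix_of_prefix_length_le hu hv hlen.le).eq_of_length hlen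

theorem mk_take_toWord_mem_cylinder (x : FreeGroup α) (n : ℕ) :
    mk (x.toWord.take n) ∈ cylinder (x.toWord.take n) := by
  have : IsReduced (x.toWord.take n) := isReduced_toWord.infix (List.take_prefix _ _).isInfix
  simp [cylinder, toWord_mk, this.reduce_eq]

theorem prefix_toWord_mul {x g : FreeGroup α} {u : List (α × Bool)} {c d : α × Bool}
    (hx : x.toWord = u ++ [c, d]) (hg : ¬ [(d.1, !d.2), (c.1, !c.2)] <+: g.toWord) :
    u ++ [c] <+: (x * g).toWord := by
  have hL : IsReduced (u ++ [c, d]) := hx ▸ isReduced_toWord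
  rw [toWord_mul, hx]
  by_cases hd : g.toWord.head? = some (d.1, !d.2)
  · obtain ⟨w, hw⟩ := List.head?_eq_some_iff.1 hd
    have hu : IsReduced (u ++ [c]) := hL.infix ⟨[], [d], by simp⟩
    have hw' : IsReduced w :=
      (hw ▸ isReduced_toWord : IsReduced ((d.1, !d.2) :: w)).infix (List.suffix_cons _ _).isInfix
    have hcancel : u ++ [c, d] ++ g.toWord = u ++ [c] ++ d :: (d.1, !d.2) :: w := by simp [hw]
    rw [hcancel, reduce.Step.eq Red.Step.not, (hu.append hw' _).reduce_eq]
    · exact List.prefix_append _ _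
    · intro y hy hc
      obtain ⟨w', rfl⟩ := List.head?_eq_some_iff.1 hc
      obtain rfl : y = c := by simpa using hy.symm
      exact hg ⟨w', by simp [hw]⟩
  · rw [(hL.append isReduced_toWord _).reduce_eq]
    · exact ⟨[d] ++ g.toWord, by simp⟩
    · intro y hy
      obtain rfl : y = d := by simpa using hy.symm
      exact hd

theorem smul_compl_cylinder_subset {x : FreeGroup α} (hx : 3 ≤ x.toWord.length) :
    x • (cylinder (x⁻¹.toWord.take 2))ᶜ ⊆ cylinder (x.toWord.take 2) := by
  obtain ⟨u, c, d, hu⟩ : ∃ u c d, x.toWord = u ++ [c, d] := by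
    rcases h : x.toWord.reverse with _ | ⟨d, _ | ⟨c, r⟩⟩
    · simp_all
    · simp_all [List.reverse_eq_cons_iff]
    · exact ⟨r.reverse, c, d, by simpa using congrArg List.reverse h⟩
  have hinv : x⁻¹.toWord.take 2 = [(d.1, !d.2), (c.1, !c.2)] := by
    simp [toWord_inv, hu, invRev]
  rintro _ ⟨g, hg, rfl⟩
  rw [hinv] at hg
  refine List.prefix_of_prefix_length_le (List.take_prefix _ _) ?_ ?_ |>.trans
    (prefix_toWord_mul hu hg)
  · exact hu ▸ ⟨[d], by simp⟩
  · simp [hu] at hx ⊢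
    omega

theorem injective_lift_of_injective_prefixes {ι : Type u} [Nontrivial ι] (x : ι → FreeGroup α)
    (hlen : ∀ i, 3 ≤ (x i).toWord.length)
    (hprefix : Function.Injective
      (Sum.elim (fun i => (x i).toWord.take 2) (fun i => (x i)⁻¹.toWord.take 2))) :
    Function.Injective (lift x) := by
  have hlen_inv (i : ι) : 3 ≤ (x i)⁻¹.toWord.length := by
    simpa [toWord_inv, invRev_length] using hlen i
  have htake (i : ι) :
      ((x i).toWord.take 2).length = 2 ∧ ((x i)⁻¹.toWord.take 2).length = 2 := by
    have := hlen i
    have := hlen_inv i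
    constructor <;> simp <;> omega
  refine injective_lift_of_ping_pong x (fun i => cylinder ((x i).toWord.take 2))
    (fun i => cylinder ((x i)⁻¹.toWord.take 2)) (fun i => ⟨_, mk_take_toWord_mem_cylinder _ _⟩)
    ?_ ?_ ?_ (fun i => smul_compl_cylinder_subset (hlen i)) (fun i => ?_)
  · exact fun i j hij => disjoint_cylinder ((htake i).1.trans (htake j).1.symm)
      (hprefix.ne (Sum.inl_injective.ne hij))
  · exact fun i j hij => disjoint_cylinder ((htake i).2.trans (htake j).2.symm)
      (hprefix.ne (Sum.inr_injective.ne hij))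
  · exact fun i j => disjoint_cylinder ((htake i).1.trans (htake j).2.symm)
      (hprefix.ne Sum.inl_ne_inr)
  · simpa using smul_compl_cylinder_subset (hlen_inv i)

end FreeGroup

/-- In the free group `F` on two generators `a, b`, the commutators
`[a,b] = a⁻¹b⁻¹ab` and `[a²,b²]` freely generate a free subgroup of rank 2:
the homomorphism from the free group of rank 2 sending the generators to
`[a,b]` and `[a²,b²]` is injective (so there is no nontrivial relation). -/
theorem stmt_5 :
    let a : FreeGroup (Fin 2) := FreeGroup.of 0
    let b : FreeGroup (Fin 2) := FreeGroup.of 1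
    Function.Injective
      (FreeGroup.lift (fun i : Fin 2 =>
        if i = 0 then a⁻¹ * b⁻¹ * a * b
        else (a ^ 2)⁻¹ * (b ^ 2)⁻¹ * a ^ 2 * b ^ 2) :
        FreeGroup (Fin 2) →* FreeGroup (Fin 2)) := by
  intro a b
  apply FreeGroup.injective_lift_of_injective_prefixes
  · intro i
    fin_cases i <;> decide
  · decide
end

section
/- Let F be the free group on a₁, b₁, and define inductively a_{i+1} = [a_i, b_i], b_{i+1} = [a_i², b_i²]. Then a_i ≠ e for every i. -/
/-!
With `φ` the endomorphism `a ↦ [a, b]`, `b ↦ [a², b²]` of `F`, one has `a_{i+1} = φⁱ(a)`, so it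
suffices that `φ` is injective. This is the ping-pong lemma for `F` acting on itself by left
multiplication, the ping-pong sets being the reduced words that begin with the first two letters of
`[a, b]`, `[a², b²]` and of their inverses: multiplying a word by one of these commutators cancels
at most one letter, except on the words of the opposite ping-pong set.
-/

namespace FreeGroup

variable {α : Type*}

theorem IsReduced.append_s8 {L M : List (α × Bool)} (hL : IsReduced L) (hM : IsReduced M)
    (h : ∀ y ∈ L.getLast?, ∀ c ∈ M.head?, c ≠ (y.1, !y.2)) : IsReduced (L ++ M) := by
  refine List.isChain_append.2 ⟨hL, hM, fun y hy c hc hyc => ?_⟩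
  by_contra hne
  exact h y hy c hc (Prod.ext hyc.symm (Bool.eq_not.2 (Ne.symm hne)))

variable [DecidableEq α]

instance : DecidablePred (IsReduced (α := α)) :=
  fun L => inferInstanceAs (Decidable (L.IsChain _))

theorem toWord_mk_mul_of_isReduced {L : List (α × Bool)} {w : FreeGroup α}
    (h : IsReduced (L ++ w.toWord)) : (mk L * w).toWord = L ++ w.toWord := by
  rw [← mk_toWord (x := w), mul_mk, toWord_mk, mk_toWord, h.reduce_eq]

def withPrefix (p : List (α × Bool)) : Set (FreeGroup α) := {w | p <+: w.toWord}

theorem disjoint_withPrefix {p q : List (α × Bool)} (hlen : p.length = q.length) (hne : p ≠ q) :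
    Disjoint (withPrefix p) (withPrefix q) :=
  Set.disjoint_left.2 fun _ hp hq =>
    hne ((List.prefix_of_prefix_length_le hp hq hlen.le).eq_of_length hlen)

theorem mk_mem_withPrefix {p : List (α × Bool)} (hp : IsReduced p) : mk p ∈ withPrefix p := by
  show p <+: _
  rw [toWord_mk, hp.reduce_eq]

theorem mk_mul_mem_withPrefix {L p : List (α × Bool)} {x y : α × Bool}
    (hL : IsReduced (L ++ [y, x])) (hp : p <+: L ++ [y]) {w : FreeGroup α}
    (hw : w ∉ withPrefix [(x.1, !x.2), (y.1, !y.2)]) : mk (L ++ [y, x]) * w ∈ withPrefix p := by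
  by_cases hx : ∃ t, w.toWord = (x.1, !x.2) :: t
  · obtain ⟨t, ht⟩ := hx
    have ht_red : IsReduced t :=
      (isReduced_toWord (x := w)).infix ⟨[(x.1, !x.2)], [], by simp [ht]⟩
    have htw : (mk t).toWord = t := by rw [toWord_mk, ht_red.reduce_eq]
    have hw_eq : w = (mk [x])⁻¹ * mk t := by
      rw [← mk_toWord (x := w), ht, inv_mk, mul_mk]
      rfl
    have hcancel : mk (L ++ [y, x]) * w = mk (L ++ [y]) * mk t := by
      rw [hw_eq, show L ++ [y, x] = L ++ [y] ++ [x] by simp, ← mul_mk, mul_assoc,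
        mul_inv_cancel_left]
    have hred : IsReduced (L ++ [y] ++ (mk t).toWord) := by
      rw [htw]
      refine (hL.infix ⟨[], [x], by simp⟩).append_s8 ht_red ?_
      rintro y' hy' c hc rfl
      obtain rfl : y' = y := by simpa using hy'.symm
      obtain ⟨t', rfl⟩ : ∃ t', t = (y'.1, !y'.2) :: t' := by
        cases t <;> simp_all
      exact hw ⟨t', by simp [ht]⟩
    show p <+: _
    rw [hcancel, toWord_mk_mul_of_isReduced hred, htw]
    exact hp.trans (List.prefix_append _ _)
  · have hred : IsReduced (L ++ [y, x] ++ w.toWord) := by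
      refine hL.append_s8 isReduced_toWord ?_
      rintro x' hx' c hc rfl
      obtain rfl : x' = x := by simpa using hx'.symm
      obtain ⟨t, ht⟩ : ∃ t, w.toWord = (x'.1, !x'.2) :: t := by
        cases h : w.toWord <;> simp_all
      exact hx ⟨t, ht⟩
    show p <+: _
    rw [toWord_mk_mul_of_isReduced hred]
    exact hp.trans ⟨x :: w.toWord, by simp⟩

end FreeGroup

open FreeGroup

def commutatorMap : FreeGroup (Fin 2) →* FreeGroup (Fin 2) :=
  FreeGroup.lift ![(of 0)⁻¹ * (of 1)⁻¹ * of 0 * of 1,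
    (of 0 ^ 2)⁻¹ * (of 1 ^ 2)⁻¹ * of 0 ^ 2 * of 1 ^ 2]

theorem commutatorMap_injective : Function.Injective commutatorMap := by
  -- `(i, true)` is the letter `of i` and `(i, false)` its inverse.
  let A : Fin 2 × Bool := (0, false)
  let a : Fin 2 × Bool := (0, true)
  let B : Fin 2 × Bool := (1, false)
  let b : Fin 2 × Bool := (1, true)
  have hgens : ![(of 0)⁻¹ * (of 1)⁻¹ * of 0 * of 1,
      (of 0 ^ 2)⁻¹ * (of 1 ^ 2)⁻¹ * of 0 ^ 2 * of 1 ^ 2] =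
      ![mk [A, B, a, b], mk [A, A, B, B, a, a, b, b]] := by
    ext i; fin_cases i <;> decide
  let X : Fin 2 → Set (FreeGroup (Fin 2)) := ![withPrefix [A, B], withPrefix [A, A]]
  let Y : Fin 2 → Set (FreeGroup (Fin 2)) := ![withPrefix [B, A], withPrefix [B, B]]
  unfold commutatorMap
  rw [hgens]
  refine injective_lift_of_ping_pong _ X Y ?_ ?_ ?_ ?_ ?_ ?_
  · intro i
    fin_cases i <;> exact ⟨_, mk_mem_withPrefix (by decide)⟩
  · intro i j hij
    fin_cases i <;> fin_cases j
    all_goals first | exact absurd rfl hij | exact disjoint_withPrefix rfl (by decide)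
  · intro i j hij
    fin_cases i <;> fin_cases j
    all_goals first | exact absurd rfl hij | exact disjoint_withPrefix rfl (by decide)
  · intro i j
    fin_cases i <;> fin_cases j <;> exact disjoint_withPrefix rfl (by decide)
  · rintro i _ ⟨w, hw, rfl⟩
    fin_cases i
    · exact mk_mul_mem_withPrefix (L := [A, B]) (by decide) (by decide) hw
    · exact mk_mul_mem_withPrefix (L := [A, A, B, B, a, a]) (by decide) (by decide) hw
  · rintro i _ ⟨w, hw, rfl⟩
    fin_cases i
    · exact mk_mul_mem_withPrefix (L := [B, A]) (by decide) (by decide) hw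
    · exact mk_mul_mem_withPrefix (L := [B, B, A, A, b, b]) (by decide) (by decide) hw

/-- With `a_{i+1} = [a_i, b_i]`, `b_{i+1} = [a_i², b_i²]` in the free group on
`a₁, b₁`, one has `a_i ≠ e` for every `i ≥ 1`. -/
theorem stmt_8 (a b : ℕ → FreeGroup (Fin 2))
    (ha1 : a 1 = FreeGroup.of 0) (hb1 : b 1 = FreeGroup.of 1)
    (ha : ∀ i ≥ 1, a (i + 1) = (a i)⁻¹ * (b i)⁻¹ * a i * b i)
    (hb : ∀ i ≥ 1, b (i + 1) = (a i ^ 2)⁻¹ * (b i ^ 2)⁻¹ * a i ^ 2 * b i ^ 2) :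
    ∀ i ≥ 1, a i ≠ 1 := by
  have key : ∀ n, ∃ ψ : FreeGroup (Fin 2) →* FreeGroup (Fin 2),
      Function.Injective ψ ∧ ψ (of 0) = a (n + 1) ∧ ψ (of 1) = b (n + 1) := by
    intro n
    induction n with
    | zero => exact ⟨MonoidHom.id _, Function.injective_id, ha1.symm, hb1.symm⟩
    | succ n ih =>
      obtain ⟨ψ, hψ, h0, h1⟩ := ih
      refine ⟨ψ.comp commutatorMap, hψ.comp commutatorMap_injective, ?_, ?_⟩
      · simp [commutatorMap, ha (n + 1) (by omega), h0, h1]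
      · simp [commutatorMap, hb (n + 1) (by omega), h0, h1]
  intro i hi
  obtain ⟨ψ, hψ, h0, -⟩ := key (i - 1)
  rw [Nat.sub_add_cancel hi] at h0
  exact h0 ▸ (map_ne_one_iff ψ hψ).2 (of_ne_one 0)
end

section
/- Let F be the free group on a₁, b₁ with a_{i+1} = [a_i, b_i], b_{i+1} = [a_i², b_i²], and let (n_k) be an increasing sequence with a_{n_k} ∉ F_{n_{k+1}} for all k. For sequences ε, ε' ∈ {0,1}^ℕ, if the finite products a_{n_1}^{ε_1}⋯a_{n_k}^{ε_k} and a_{n_1}^{ε'_1}⋯a_{n_k}^{ε'_k} are equal in F/F_{n_{k+1}} for all k, then ε = ε'. -/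
/-!
Proof idea: compare the two products prefix by prefix. If `ε` and `ε'` agree below `k`, the
products up to `k` share their first `k - 1` factors, so their equality modulo `F_{n_{k+1}}`
forces `a_{n_k}^{ε_k} ≡ a_{n_k}^{ε'_k}`; as `a_{n_k} ∉ F_{n_{k+1}}`, the exponents agree.
-/

theorem QuotientGroup.fin_two_eq_of_mk_mul_pow_eq {G : Type*} [Group G] {H : Subgroup G}
    {g : G} (hg : g ∉ H) (x : G) {e e' : Fin 2}
    (h : (x * g ^ (e : ℕ) : G ⧸ H) = x * g ^ (e' : ℕ)) : e = e' := by
  rw [QuotientGroup.eq, mul_inv_rev, mul_assoc, inv_mul_cancel_left] at h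
  fin_cases e <;> fin_cases e' <;> simp_all

theorem eq_of_forall_mk_prod_range_pow_eq {G : Type*} [Group G] (g : ℕ → G)
    (N : ℕ → Subgroup G) (hg : ∀ k, g k ∉ N k) (ε ε' : ℕ → Fin 2)
    (h : ∀ k, (((List.range (k + 1)).map (fun j => g j ^ (ε j : ℕ))).prod : G ⧸ N k) =
      ((List.range (k + 1)).map (fun j => g j ^ (ε' j : ℕ))).prod) :
    ε = ε' := by
  suffices ∀ m, ∀ j < m, ε j = ε' j from funext fun j => this (j + 1) j j.lt_succ_self
  intro m
  induction m with
  | zero => simp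
  | succ m ih =>
    have hprefix : (List.range m).map (fun j => g j ^ (ε j : ℕ)) =
        (List.range m).map (fun j => g j ^ (ε' j : ℕ)) :=
      List.map_congr_left fun j hj => by rw [ih j (List.mem_range.mp hj)]
    have hm := h m
    simp only [List.range_succ, List.map_append, List.prod_append, hprefix, List.map_cons,
      List.map_nil, List.prod_singleton] at hm
    have hlast := QuotientGroup.fin_two_eq_of_mk_mul_pow_eq (hg m) _ hm
    intro j hj
    rcases Nat.lt_succ_iff_lt_or_eq.mp hj with hj | rfl
    exacts [ih j hj, hlast]

theorem stmt_15_general (a : ℕ → FreeGroup (Fin 2))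
    (n : ℕ → ℕ)
    (hnot : ∀ k ≥ 1, a (n k) ∉ Subgroup.lowerCentralSeries (⊤ : Subgroup (FreeGroup (Fin 2))) (n (k + 1) - 1))
    (ε ε' : ℕ → Fin 2)
    (heq : ∀ k ≥ 1,
      (QuotientGroup.mk (((List.range k).map
            (fun j => a (n (j + 1)) ^ ((ε (j + 1) : ℕ)))).prod) :
          FreeGroup (Fin 2) ⧸ Subgroup.lowerCentralSeries (⊤ : Subgroup (FreeGroup (Fin 2))) (n (k + 1) - 1)) =
        QuotientGroup.mk (((List.range k).map
            (fun j => a (n (j + 1)) ^ ((ε' (j + 1) : ℕ)))).prod)) :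
    ∀ k ≥ 1, ε k = ε' k := by
  have hshift := eq_of_forall_mk_prod_range_pow_eq (fun j => a (n (j + 1)))
    (fun j => Subgroup.lowerCentralSeries ⊤ (n (j + 2) - 1))
    (fun j => hnot (j + 1) j.succ_pos) (fun j => ε (j + 1)) (fun j => ε' (j + 1))
    (fun j => heq (j + 1) j.succ_pos)
  intro k hk
  obtain ⟨m, rfl⟩ := Nat.exists_eq_add_of_le' hk
  exact congrFun hshift m

/-- With `a_{i+1} = [a_i, b_i]`, `b_{i+1} = [a_i², b_i²]` in the free group `F`
on `a₁, b₁`, and `(n_k)` strictly increasing with `a_{n_k} ∉ F_{n_{k+1}}` for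
`k ≥ 1` (paper's `F_m` is `lowerCentralSeries F (m-1)`): if two 0-1 sequences
`ε, ε'` (indexed from 1) satisfy that the products
`a_{n_1}^{ε_1} ⋯ a_{n_k}^{ε_k}` and `a_{n_1}^{ε'_1} ⋯ a_{n_k}^{ε'_k}` are
equal in `F/F_{n_{k+1}}` for every `k ≥ 1`, then `ε = ε'`. -/
theorem stmt_15 (a b : ℕ → FreeGroup (Fin 2))
    (ha1 : a 1 = FreeGroup.of 0) (hb1 : b 1 = FreeGroup.of 1)
    (ha : ∀ i ≥ 1, a (i + 1) = (a i)⁻¹ * (b i)⁻¹ * a i * b i)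
    (hb : ∀ i ≥ 1, b (i + 1) = (a i ^ 2)⁻¹ * (b i ^ 2)⁻¹ * a i ^ 2 * b i ^ 2)
    (n : ℕ → ℕ) (hn : StrictMono n) (hn0 : n 0 = 1) (hn1 : n 1 = 2)
    (hnot : ∀ k ≥ 1, a (n k) ∉ Subgroup.lowerCentralSeries (⊤ : Subgroup (FreeGroup (Fin 2))) (n (k + 1) - 1))
    (ε ε' : ℕ → Fin 2)
    (heq : ∀ k ≥ 1,
      (QuotientGroup.mk (((List.range k).map
            (fun j => a (n (j + 1)) ^ ((ε (j + 1) : ℕ)))).prod) :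
          FreeGroup (Fin 2) ⧸ Subgroup.lowerCentralSeries (⊤ : Subgroup (FreeGroup (Fin 2))) (n (k + 1) - 1)) =
        QuotientGroup.mk (((List.range k).map
            (fun j => a (n (j + 1)) ^ ((ε' (j + 1) : ℕ)))).prod)) :
    ∀ k ≥ 1, ε k = ε' k :=
  stmt_15_general a n hnot ε ε' heq
end
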